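/- arXiv:2208.07543 — 3 statements merged into one kernel-verified Lean document; each statement's English description precedes it below -/
import Mathlib

section
/- There exists a number 0 < ā < 1 such that for every a with ā < a < 1, the function f is strictly increasing on (2, ∞) and satisfies f₂ < f(n) < f_∞ for all n > 2; that is, the range of f is contained in the interval (f₂, f_∞). -/
/-- The reduced identifiability function of the pairwise SIR model:
`f a n = ((a^(1/n) − a^(2/n))/(a^(2/n) − a))·(n−2)`, where `a` is the final
susceptible fraction `s_∞` and `n` the average degree. -/
noncomputable def pwF (a n : ℝ) : ℝ :=
  ((a ^ ((1 : ℝ)/n) - a ^ ((2 : ℝ)/n)) / (a ^ ((2 : ℝ)/n) - a)) * (n - 2)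

/-- `f₂ = 2(a − √a)/(a·ln a)`, the limit of `f` as `n → 2⁺`. -/
noncomputable def pwFTwo (a : ℝ) : ℝ := 2 * (a - Real.sqrt a) / (a * Real.log a)

/-- `f_∞ = (ln a)/(a − 1)`, the limit of `f` as `n → ∞`. -/
noncomputable def pwFInf (a : ℝ) : ℝ := Real.log a / (a - 1)

/-!
Write `a = exp (-t)` and `u = t / n`. With `φ x = (exp x - 1) / x` (that is, `dslope exp 0`),
one has `f n = G u` for `G u = φ u / φ (2 u - t)`, while `f₂ = G (t / 2)` and `f_∞ = G 0`.
As `n` increases through `(2, ∞)`, `u` decreases through `(0, t / 2)`, so everything follows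
once `G` is strictly decreasing on `[0, t / 2]`. With `L = φ' / φ`, `G' < 0` means
`L u < 2 L (2 u - t)`, and this follows from `L x ≤ (1 + x) / 2` for `x > 0` together with
`L x + L (-x) = 1` as soon as `t ≤ 1 / 2`, i.e. for `a > exp (-1 / 2)`.
-/

open Real Set

lemma dslope_exp_zero_of_ne {x : ℝ} (hx : x ≠ 0) : dslope exp 0 x = (exp x - 1) / x := by
  rw [dslope_of_ne _ hx, slope_def_field, exp_zero, sub_zero]

lemma dslope_exp_zero_zero : dslope exp 0 0 = 1 := by simp

lemma dslope_exp_zero_pos (x : ℝ) : 0 < dslope exp 0 x := by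
  rcases lt_trichotomy x 0 with hx | rfl | hx
  · rw [dslope_exp_zero_of_ne hx.ne]
    exact div_pos_of_neg_of_neg (by linarith [exp_lt_one_iff.2 hx]) hx
  · simp
  · rw [dslope_exp_zero_of_ne hx.ne']
    exact div_pos (by linarith [one_lt_exp_iff.2 hx]) hx

lemma continuous_dslope_exp_zero : Continuous (dslope exp 0) :=
  continuousOn_univ.1 <| (continuousOn_dslope Filter.univ_mem).2
    ⟨continuous_exp.continuousOn, differentiableAt_exp⟩

noncomputable def expSlopeDeriv (x : ℝ) : ℝ := ((x - 1) * exp x + 1) / x ^ 2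

lemma hasDerivAt_dslope_exp_zero {x : ℝ} (hx : x ≠ 0) :
    HasDerivAt (dslope exp 0) (expSlopeDeriv x) x := by
  have h := ((hasDerivAt_exp x).sub_const 1).div (hasDerivAt_id x) hx
  refine (h.congr_deriv ?_).congr_of_eventuallyEq ?_
  · rw [expSlopeDeriv, id]
    field_simp
    ring
  · filter_upwards [isOpen_ne.mem_nhds hx] with y hy
    exact dslope_exp_zero_of_ne hy

lemma expSlopeDeriv_le {x : ℝ} (hx : 0 < x) :
    expSlopeDeriv x ≤ (1 + x) / 2 * dslope exp 0 x := by
  have hexp := quadratic_le_exp_of_nonneg hx.le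
  have key : x ^ 2 + x + 2 ≤ (x ^ 2 - x + 2) * exp x := by
    nlinarith [pow_pos hx 3, pow_pos hx 4]
  rw [dslope_exp_zero_of_ne hx.ne', expSlopeDeriv, div_le_iff₀ (by positivity)]
  have : (1 + x) / 2 * ((exp x - 1) / x) * x ^ 2 = (1 + x) * (exp x - 1) * x / 2 := by
    field_simp
  rw [this]
  nlinarith

/-- Since `dslope exp 0 (-x) = exp (-x) * dslope exp 0 x`, the logarithmic derivatives
at `x` and `-x` add up to `1`. -/
lemma expSlopeDeriv_div_add_neg {x : ℝ} (hx : x ≠ 0) :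
    expSlopeDeriv x / dslope exp 0 x + expSlopeDeriv (-x) / dslope exp 0 (-x) = 1 := by
  have hexp : exp x - 1 ≠ 0 := sub_ne_zero.2 (by simpa using hx)
  have hexp' : 1 - exp x ≠ 0 := fun h => hexp (by linarith)
  rw [dslope_exp_zero_of_ne hx, dslope_exp_zero_of_ne (neg_ne_zero.2 hx), expSlopeDeriv,
    expSlopeDeriv, exp_neg]
  field_simp
  ring

lemma expSlopeDeriv_div_lt {u w : ℝ} (hu : 0 < u) (hw : 0 < w) (h : u / 2 + w < 1 / 2) :
    expSlopeDeriv u / dslope exp 0 u < 2 * (expSlopeDeriv (-w) / dslope exp 0 (-w)) := by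
  have hu' := (div_le_iff₀ (dslope_exp_zero_pos u)).2 (expSlopeDeriv_le hu)
  have hw' := (div_le_iff₀ (dslope_exp_zero_pos w)).2 (expSlopeDeriv_le hw)
  linarith [expSlopeDeriv_div_add_neg hw.ne']

noncomputable def expSlopeRatio (t u : ℝ) : ℝ := dslope exp 0 u / dslope exp 0 (2 * u - t)

lemma strictAntiOn_expSlopeRatio {t : ℝ} (ht : t ≤ 1 / 2) :
    StrictAntiOn (expSlopeRatio t) (Icc 0 (t / 2)) := by
  have hcont : Continuous fun u => dslope exp 0 (2 * u - t) :=
    continuous_dslope_exp_zero.comp (by fun_prop)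
  refine strictAntiOn_of_deriv_neg (convex_Icc _ _) ?_ fun u hu => ?_
  · exact (continuous_dslope_exp_zero.div hcont
      fun u => (dslope_exp_zero_pos _).ne').continuousOn
  rw [interior_Icc] at hu
  obtain ⟨hu0, hut⟩ := hu
  set v := 2 * u - t
  have hinner : HasDerivAt (fun y => 2 * y - t) 2 u := by
    simpa using ((hasDerivAt_id u).const_mul 2).sub_const t
  have hd : HasDerivAt (expSlopeRatio t) ((expSlopeDeriv u * dslope exp 0 v
      - dslope exp 0 u * (expSlopeDeriv v * 2)) / dslope exp 0 v ^ 2) u :=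
    (hasDerivAt_dslope_exp_zero hu0.ne').div
      ((hasDerivAt_dslope_exp_zero (by linarith : v ≠ 0)).comp u hinner)
      (dslope_exp_zero_pos _).ne'
  rw [hd.deriv]
  refine div_neg_of_neg_of_pos ?_ (pow_pos (dslope_exp_zero_pos _) 2)
  have key := expSlopeDeriv_div_lt hu0 (by linarith : 0 < t - 2 * u) (by linarith)
  rw [show -(t - 2 * u) = v by ring, mul_div_assoc',
    div_lt_div_iff₀ (dslope_exp_zero_pos _) (dslope_exp_zero_pos _)] at key
  linarith

lemma pwF_exp_neg {t n : ℝ} (ht : t ≠ 0) (hn0 : n ≠ 0) (hn2 : n ≠ 2) :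
    pwF (exp (-t)) n = expSlopeRatio t (t / n) := by
  set u := t / n with hu
  have htu : t = n * u := by rw [hu]; field_simp
  have hu0 : u ≠ 0 := div_ne_zero ht hn0
  have hv : 2 * u - t ≠ 0 := by
    rw [htu, ← sub_mul]; exact mul_ne_zero (sub_ne_zero.2 hn2.symm) hu0
  have h1 : exp (-t) ^ ((1 : ℝ) / n) = (exp u)⁻¹ := by
    rw [← exp_mul, ← exp_neg]; congr 1; rw [hu]; ring
  have h2 : exp (-t) ^ ((2 : ℝ) / n) = (exp u)⁻¹ ^ 2 := by
    rw [← exp_mul, ← exp_neg, ← exp_nat_mul]; congr 1; rw [hu]; push_cast; ring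
  have h3 : exp (2 * u - t) = exp u ^ 2 * exp (-t) := by
    rw [sub_eq_add_neg, exp_add, two_mul, exp_add, sq]
  rw [pwF, expSlopeRatio, h1, h2, dslope_exp_zero_of_ne hu0, dslope_exp_zero_of_ne hv, h3]
  have hn : n - 2 = (t - 2 * u) / u := by rw [htu]; field_simp
  have hX := exp_pos u
  have hXA : 1 - exp u ^ 2 * exp (-t) ≠ 0 := by
    rw [← h3, sub_ne_zero, ne_comm, Ne, exp_eq_one_iff]; exact hv
  have hXA' : exp u ^ 2 * exp (-t) - 1 ≠ 0 := fun h => hXA (by linarith)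
  rw [hn]
  field_simp
  ring

lemma pwFTwo_exp_neg {t : ℝ} (ht : t ≠ 0) : pwFTwo (exp (-t)) = expSlopeRatio t (t / 2) := by
  have hB : √(exp (-t)) = exp (-(t / 2)) := by rw [← exp_half]; ring_nf
  rw [pwFTwo, expSlopeRatio, hB, log_exp, show 2 * (t / 2) - t = 0 by ring, dslope_exp_zero_zero,
    dslope_exp_zero_of_ne (by positivity), exp_neg, exp_neg]
  have he : exp t = exp (t / 2) ^ 2 := by rw [← exp_nat_mul]; ring_nf
  have hpos := exp_pos (t / 2)
  rw [he]
  field_simp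
  ring

lemma pwFInf_exp_neg {t : ℝ} (ht : t ≠ 0) : pwFInf (exp (-t)) = expSlopeRatio t 0 := by
  rw [pwFInf, expSlopeRatio, log_exp, mul_zero, zero_sub, dslope_exp_zero_zero,
    dslope_exp_zero_of_ne (neg_ne_zero.2 ht), one_div_div]

/-- There exists `0 < ā < 1` such that for every `a` with `ā < a < 1`, the function
`f = pwF a` is strictly increasing on `(2,∞)` and satisfies `f₂ < f n < f_∞` for all
`n > 2`; in particular the range of `f` on `(2,∞)` is contained in `(f₂, f_∞)`. -/
theorem pairwise_f_monotone_and_bounded :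
    ∃ abar : ℝ, 0 < abar ∧ abar < 1 ∧
      ∀ a : ℝ, abar < a → a < 1 →
        StrictMonoOn (pwF a) (Set.Ioi (2 : ℝ)) ∧
        (∀ n : ℝ, 2 < n → pwFTwo a < pwF a n ∧ pwF a n < pwFInf a) ∧
        pwF a '' (Set.Ioi (2 : ℝ)) ⊆ Set.Ioo (pwFTwo a) (pwFInf a) := by
  refine ⟨exp (-(1 / 2)), exp_pos _, exp_lt_one_iff.2 (by norm_num), fun a ha ha1 => ?_⟩
  have ha0 : 0 < a := (exp_pos _).trans ha
  obtain ⟨t, ht0, ht, rfl⟩ : ∃ t, 0 < t ∧ t < 1 / 2 ∧ exp (-t) = a :=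
    ⟨-log a, by linarith [log_neg ha0 ha1], by linarith [(lt_log_iff_exp_lt ha0).2 ha],
      by rw [neg_neg, exp_log ha0]⟩
  have hG := strictAntiOn_expSlopeRatio ht.le
  have hmaps : MapsTo (t / ·) (Ioi 2) (Icc 0 (t / 2)) := fun n (hn : 2 < n) =>
    ⟨by positivity, div_le_div_of_nonneg_left ht0.le two_pos hn.le⟩
  have hrep : EqOn (pwF (exp (-t))) (expSlopeRatio t ∘ (t / ·)) (Ioi 2) := fun n (hn : 2 < n) =>
    pwF_exp_neg ht0.ne' (by linarith) hn.ne'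
  have hbounds (n : ℝ) (hn : 2 < n) :
      pwFTwo (exp (-t)) < pwF (exp (-t)) n ∧ pwF (exp (-t)) n < pwFInf (exp (-t)) := by
    rw [pwFTwo_exp_neg ht0.ne', pwFInf_exp_neg ht0.ne', hrep hn]
    exact ⟨hG (hmaps hn) ⟨by positivity, le_rfl⟩ (div_lt_div_of_pos_left ht0 two_pos hn),
      hG ⟨le_rfl, by positivity⟩ (hmaps hn) (by positivity)⟩
  refine ⟨?_, hbounds, ?_⟩
  · exact (hG.comp (fun _ hm _ _ hmn => div_lt_div_of_pos_left ht0 (zero_lt_two.trans hm) hmn)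
      hmaps).congr hrep.symm
  · rintro _ ⟨n, hn, rfl⟩
    exact hbounds n hn
end

section
/- For every a ∈ (0,1), the limit of f(n) as n tends to 2 from above exists and equals f₂ = 2(a − √a)/(a · ln a). -/
/-!
Write `f(n) = (a^(1/n) − a^(2/n)) · (n − 2)/(a^(2/n) − a)`. The first factor is continuous
at `n = 2` with value `√a − a`. The denominator of the second vanishes at `n = 2`, so the
second factor is the reciprocal of a difference quotient of `n ↦ a^(2/n)` and tends to the
reciprocal of its derivative `−(a ln a)/2`, which is nonzero because `a ≠ 1`.
-/

open Filter Real Set Topology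

theorem HasDerivAt.tendsto_sub_div_of_eq_zero {g : ℝ → ℝ} {d x : ℝ} (hg : HasDerivAt g d x)
    (hgx : g x = 0) (hd : d ≠ 0) : Tendsto (fun y => (y - x) / g y) (𝓝[≠] x) (𝓝 d⁻¹) := by
  have hslope : Tendsto (fun y => g y / (y - x)) (𝓝[≠] x) (𝓝 d) :=
    (hasDerivAt_iff_tendsto_slope.mp hg).congr fun y => by
      simp only [slope_def_field, hgx, sub_zero]
  simpa only [inv_div] using hslope.inv₀ hd

theorem hasDerivAt_const_rpow_div {a : ℝ} (ha : 0 < a) (c : ℝ) {x : ℝ} (hx : x ≠ 0) :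
    HasDerivAt (fun n => a ^ (c / n)) (a ^ (c / x) * log a * (-c / x ^ 2)) x := by
  have hdiv : HasDerivAt (fun n => c / n) (-c / x ^ 2) x := by
    simpa only [div_eq_mul_inv, neg_mul, mul_neg] using (hasDerivAt_inv hx).const_mul c
  exact (hasStrictDerivAt_const_rpow ha (c / x)).hasDerivAt.comp x hdiv

/-- For every `a ∈ (0,1)`, `f(n) → f₂ = 2(a − √a)/(a·ln a)` as `n → 2⁺`. -/
theorem pairwise_f_tendsto_two (a : ℝ) (ha0 : 0 < a) (ha1 : a < 1) :
    Filter.Tendsto (pwF a) (nhdsWithin 2 (Set.Ioi (2 : ℝ))) (nhds (pwFTwo a)) := by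
  have hlog : log a ≠ 0 := (log_neg ha0 ha1).ne
  have hderiv : HasDerivAt (fun n => a ^ ((2 : ℝ) / n) - a) (a * log a * (-1 / 2)) 2 :=
    ((hasDerivAt_const_rpow_div ha0 2 two_ne_zero).sub_const a).congr_deriv (by norm_num)
  have hquot : Tendsto (fun n => (n - 2) / (a ^ ((2 : ℝ) / n) - a)) (𝓝[>] 2)
      (𝓝 (a * log a * (-1 / 2))⁻¹) :=
    (hderiv.tendsto_sub_div_of_eq_zero (by norm_num) (by simp [ha0.ne', hlog])).mono_left
      (nhdsWithin_mono _ fun _ hn => (mem_Ioi.mp hn).ne')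
  have hnum : Tendsto (fun n => a ^ ((1 : ℝ) / n) - a ^ ((2 : ℝ) / n)) (𝓝[>] 2)
      (𝓝 (√a - a)) := by
    have hcont := (hasDerivAt_const_rpow_div ha0 1 two_ne_zero).continuousAt.sub
      (hasDerivAt_const_rpow_div ha0 2 two_ne_zero).continuousAt
    have hvalue : √a - a = a ^ ((1 : ℝ) / 2) - a ^ ((2 : ℝ) / 2) := by
      rw [sqrt_eq_rpow]
      norm_num
    exact hvalue ▸ hcont.continuousWithinAt.tendsto
  have hlimit : (√a - a) * (a * log a * (-1 / 2))⁻¹ = pwFTwo a := by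
    unfold pwFTwo
    field_simp
    ring
  rw [← hlimit]
  refine (hnum.mul hquot).congr fun n => ?_
  unfold pwF
  ring
end

section
/- For every a ∈ (0,1), the limit of f(n) as n tends to infinity exists and equals f_∞ = (ln a)/(a − 1). -/
/-!
Writing `n - 2 = n * (1 - 2 / n)`, the factor `n` goes to the numerator, and
`n * (a ^ (c / n) - 1) → c * log a` (the derivative of `t ↦ a ^ (c * t)` at `0`) gives
`n * (a ^ (1 / n) - a ^ (2 / n)) → -log a`, while the denominator tends to `1 - a`.
-/

open Filter Topology Real

theorem tendsto_mul_rpow_div_sub_one {x : ℝ} (hx : 0 < x) (c : ℝ) :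
    Tendsto (fun n : ℝ => n * (x ^ (c / n) - 1)) atTop (𝓝 (c * log x)) := by
  have hderiv : HasDerivAt (fun t : ℝ => x ^ (c * t)) (c * log x) 0 := by
    simpa [mul_comm] using ((hasDerivAt_id (0 : ℝ)).const_mul c).const_rpow hx
  refine (hderiv.tendsto_slope_zero_right.comp tendsto_inv_atTop_nhdsGT_zero).congr fun n => ?_
  simp [div_eq_mul_inv]

theorem tendsto_rpow_div_atTop {x : ℝ} (hx : 0 < x) (c : ℝ) :
    Tendsto (fun n : ℝ => x ^ (c / n)) atTop (𝓝 1) := by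
  simpa [Function.comp_def] using ((continuousAt_const_rpow hx.ne').tendsto).comp
    (tendsto_const_nhds.div_atTop tendsto_id : Tendsto (fun n : ℝ => c / n) atTop (𝓝 0))

/-- For every `a ∈ (0,1)`, `f(n) → f_∞ = (ln a)/(a − 1)` as `n → ∞`. -/
theorem pairwise_f_tendsto_atTop (a : ℝ) (ha0 : 0 < a) (ha1 : a < 1) :
    Filter.Tendsto (pwF a) Filter.atTop (nhds (pwFInf a)) := by
  have hnum := (tendsto_mul_rpow_div_sub_one ha0 1).sub (tendsto_mul_rpow_div_sub_one ha0 2)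
  have hden := (tendsto_rpow_div_atTop ha0 2).sub_const a
  have hfactor : Tendsto (fun n : ℝ => 1 - 2 / n) atTop (𝓝 1) := by
    simpa using tendsto_const_nhds.sub
      ((tendsto_const_nhds (x := (2 : ℝ))).div_atTop tendsto_id)
  have hlim := (hnum.div hden (sub_ne_zero.2 ha1.ne')).mul hfactor
  have hval : (1 * log a - 2 * log a) / (1 - a) * 1 = pwFInf a := by
    rw [pwFInf, ← neg_div_neg_eq]
    ring
  rw [hval] at hlim
  refine hlim.congr' ?_
  filter_upwards [eventually_ne_atTop 0] with n hn
  simp only [pwF, Pi.div_apply]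
  field_simp
  ring
end
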